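/- arXiv:1711.05933 — 3 statements merged into one kernel-verified Lean document; each statement's English description precedes it below -/
import Mathlib

section
/- Let B be a subgroup of G contained in Z. Then the inflation homomorphism inf : H²(G/B, D) → H²(G, D) is surjective and its kernel N is isomorphic to Hom(B, D); consequently H²(G, D) ≅ H²(G/B, D)/N with N ≅ Hom(B, D). -/
/-!
Setting (central products): `G` is a group with normal subgroups `H` and `K` such that
`G = HK` (i.e. `H ⊔ K = ⊤`) and `[H, K] = 1` (i.e. every element of `H` commutes with
every element of `K`).  We set `A = H ⊓ K` and `Z = ⁅H,H⁆ ⊓ ⁅K,K⁆`; both are central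
in `G`.  Coefficients are taken in a divisible abelian group `D`, regarded as a trivial
module.  Second cohomology `H2 X D` is realized concretely as (inhomogeneous)
2-cocycles modulo 2-coboundaries, and `Hom(X, D)` is realized as `Additive X →+ D`.
-/

open scoped TensorProduct

set_option maxHeartbeats 1000000
set_option synthInstance.maxHeartbeats 1000000
set_option synthInstance.maxSize 2000

namespace SchurCP

variable (G : Type) [Group G] (D : Type) [AddCommGroup D]

/-- The group of 2-cocycles on `G` with values in the trivial module `D`. -/
def cocycles2 : AddSubgroup (G → G → D) where
  carrier := {f | ∀ g h k : G, f g h + f (g * h) k = f h k + f g (h * k)}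
  zero_mem' := by intro g h k; simp
  add_mem' := by
    intro a b ha hb g h k
    simp only [Pi.add_apply]
    rw [add_add_add_comm, ha g h k, hb g h k, add_add_add_comm]
  neg_mem' := by
    intro a ha g h k
    simp only [Pi.neg_apply]
    rw [← neg_add, ← neg_add, ha g h k]

/-- The group of 2-coboundaries on `G` with values in the trivial module `D`. -/
def coboundaries2 : AddSubgroup (G → G → D) where
  carrier := {f | ∃ φ : G → D, ∀ g h : G, f g h = φ g + φ h - φ (g * h)}
  zero_mem' := ⟨0, by simp⟩
  add_mem' := by
    rintro a b ⟨φ, hφ⟩ ⟨ψ, hψ⟩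
    exact ⟨φ + ψ, fun g h => by simp only [Pi.add_apply, hφ g h, hψ g h]; abel⟩
  neg_mem' := by
    rintro a ⟨φ, hφ⟩
    exact ⟨-φ, fun g h => by simp only [Pi.neg_apply, hφ g h]; abel⟩

/-- The second cohomology group `H²(G, D)` of `G` with coefficients in the
trivial module `D`. -/
def H2 : Type := cocycles2 G D ⧸ (coboundaries2 G D).addSubgroupOf (cocycles2 G D)

instance : AddCommGroup (H2 G D) :=
  QuotientAddGroup.Quotient.addCommGroup ((coboundaries2 G D).addSubgroupOf (cocycles2 G D))

variable {G D}

/-- The cohomology class of a 2-cocycle. -/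
abbrev H2mk (f : cocycles2 G D) : H2 G D := QuotientAddGroup.mk f

/-- Pullback of a 2-cocycle along a group homomorphism. -/
def pullCocycle {G' : Type} [Group G'] (π : G' →* G) :
    cocycles2 G D →+ cocycles2 G' D where
  toFun f := ⟨fun x y => (f : G → G → D) (π x) (π y), by
    intro x y z
    simpa only [map_mul] using f.2 (π x) (π y) (π z)⟩
  map_zero' := rfl
  map_add' _ _ := rfl

/-- The homomorphism `H²(G, D) → H²(G', D)` induced by a group homomorphism
`π : G' → G`; this specializes to restriction maps (for inclusions of subgroups)
and to inflation maps (for quotient maps). -/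
def H2Map {G' : Type} [Group G'] (π : G' →* G) : H2 G D →+ H2 G' D :=
  QuotientAddGroup.map _ _ (pullCocycle π) (by
    intro f hf
    rw [AddSubgroup.mem_addSubgroupOf] at hf
    rw [AddSubgroup.mem_comap, AddSubgroup.mem_addSubgroupOf]
    obtain ⟨φ, hφ⟩ := hf
    exact ⟨fun x => φ (π x), fun x y => by
      show (f : G → G → D) (π x) (π y) = _
      rw [hφ (π x) (π y), ← map_mul]⟩)

theorem commutator_le_self {X : Type} [Group X] (H : Subgroup X) : ⁅H, H⁆ ≤ H := by
  rw [Subgroup.commutator_le]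
  intro g₁ h₁ g₂ h₂
  rw [commutatorElement_def]
  exact H.mul_mem (H.mul_mem (H.mul_mem h₁ h₂) (H.inv_mem h₁)) (H.inv_mem h₂)

theorem inf_commutator_le_inf {X : Type} [Group X] (H K : Subgroup X) :
    ⁅H, H⁆ ⊓ ⁅K, K⁆ ≤ H ⊓ K :=
  inf_le_inf (commutator_le_self H) (commutator_le_self K)

theorem subgroupOf_le {X : Type} [Group X] {B C : Subgroup X} (h : B ≤ C)
    (J : Subgroup X) : B.subgroupOf J ≤ C.subgroupOf J := fun _x hx => h hx

/-- The natural projection `X/N → X/M` for `N ≤ M`. -/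
def quotProj {X : Type} [Group X] {N M : Subgroup X} [N.Normal] [M.Normal] (h : N ≤ M) :
    (X ⧸ N) →* (X ⧸ M) :=
  QuotientGroup.map N M (MonoidHom.id X) (by rwa [Subgroup.comap_id])

/-- The inflation homomorphism `H²(X/M, D) → H²(X/N, D)` for `N ≤ M`. -/
def inflMap {X : Type} [Group X] {N M : Subgroup X} [N.Normal] [M.Normal]
    (h : N ≤ M) (D : Type) [AddCommGroup D] : H2 (X ⧸ M) D →+ H2 (X ⧸ N) D :=
  H2Map (quotProj h)

/-- The natural homomorphism `H/(A ∩ H) → X/A` for subgroups `A, H` of `X`;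
for `A ≤ H` this realizes `H/A` as a subgroup of `X/A`. -/
def quotInclusion {X : Type} [Group X] (H A : Subgroup X) [A.Normal]
    [(A.subgroupOf H).Normal] : (↥H ⧸ A.subgroupOf H) →* X ⧸ A :=
  QuotientGroup.map (A.subgroupOf H) A H.subtype (fun _x hx => hx)

/-- The abelian tensor product `X ⊗ Y = X/[X,X] ⊗_ℤ Y/[Y,Y]` of two groups. -/
abbrev AbTensor (X Y : Type) [Group X] [Group Y] : Type :=
  TensorProduct ℤ (Additive (Abelianization X)) (Additive (Abelianization Y))

/-- The element `x[X,X] ⊗ y[Y,Y]` of the abelian tensor product. -/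
noncomputable abbrev tmulAb {X Y : Type} [Group X] [Group Y] (x : X) (y : Y) :
    AbTensor X Y :=
  Additive.ofMul (Abelianization.of x) ⊗ₜ[ℤ] Additive.ofMul (Abelianization.of y)

/-- The map on abelian tensor products induced by a pair of group homomorphisms. -/
noncomputable def abTensorMap {X Y X' Y' : Type} [Group X] [Group Y] [Group X'] [Group Y']
    (f : X →* X') (g : Y →* Y') : AbTensor X Y →ₗ[ℤ] AbTensor X' Y' :=
  TensorProduct.map (MonoidHom.toAdditive (Abelianization.map f)).toIntLinearMap
    (MonoidHom.toAdditive (Abelianization.map g)).toIntLinearMap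

/-!
Every 2-cocycle `F` defines a central extension `E` of `G` by `D`. By the three subgroups
lemma, the preimage in `E` of `B ≤ ⁅H, H⁆ ⊓ ⁅K, K⁆` is central, hence abelian, and since `D`
is divisible it splits: `E` contains a central copy of `B` lying over `B`. A section of
`E → G` that is equivariant for this copy yields a cocycle cohomologous to `F` which is
constant on `B`-cosets, so inflation is onto. Its kernel is the image of the transgression
`Hom(B, D) → H²(G/B, D)`, `χ ↦ [χ ∘ c]` for the factor set `c` of a transversal, and the
transgression is injective because `B ≤ ⁅G, G⁆` and `D` is abelian.
-/

section CentralProduct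

variable {E : Type*} [Group E]

theorem commutator_le_centralizer_of_commutator_le_center {P Q : Subgroup E}
    (hPQ : ⁅P, Q⁆ ≤ Subgroup.center E) : ⁅P, P⁆ ≤ Subgroup.centralizer Q := by
  have hbot : ∀ {R S : Subgroup E}, ⁅R, S⁆ ≤ Subgroup.center E → ⁅⁅R, S⁆, P⁆ = ⊥ :=
    fun h => Subgroup.commutator_eq_bot_iff_le_centralizer.mpr
      (h.trans (Subgroup.center_le_centralizer _))
  rw [← Subgroup.commutator_eq_bot_iff_le_centralizer]
  exact Subgroup.commutator_commutator_eq_bot_of_rotate (hbot hPQ)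
    (hbot (Subgroup.commutator_comm Q P ▸ hPQ))

theorem le_center_of_le_centralizer {S P Q : Subgroup E} (hPQ : P ⊔ Q = ⊤)
    (hP : S ≤ Subgroup.centralizer P) (hQ : S ≤ Subgroup.centralizer Q) :
    S ≤ Subgroup.center E := by
  rw [Subgroup.le_centralizer_iff] at hP hQ
  have htop : Subgroup.centralizer (S : Set E) = ⊤ := top_le_iff.mp (hPQ ▸ sup_le hP hQ)
  exact Subgroup.centralizer_eq_top_iff_subset.mp htop

theorem comap_commutator_inf_le_center {X : Type*} [Group X] {π : E →* X}
    (hπ : Function.Surjective π) (hker : π.ker ≤ Subgroup.center E) {H K : Subgroup X}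
    (hprod : H ⊔ K = ⊤) (hcomm : ⁅H, K⁆ = ⊥) :
    (⁅H, H⁆ ⊓ ⁅K, K⁆).comap π ≤ Subgroup.center E := by
  have comap_commutator : ∀ L : Subgroup X,
      ⁅L, L⁆.comap π = ⁅L.comap π, L.comap π⁆ ⊔ π.ker := fun L => by
    rw [← Subgroup.comap_map_eq, Subgroup.map_commutator,
      Subgroup.map_comap_eq_self_of_surjective hπ]
  have hPQ : ⁅H.comap π, K.comap π⁆ ≤ Subgroup.center E := by
    refine le_trans ?_ hker
    rw [← MonoidHom.comap_bot, ← Subgroup.map_le_iff_le_comap, Subgroup.map_commutator,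
      Subgroup.map_comap_eq_self_of_surjective hπ, Subgroup.map_comap_eq_self_of_surjective hπ,
      hcomm]
  have hker_le : ∀ R : Subgroup E, π.ker ≤ Subgroup.centralizer R :=
    fun R => hker.trans (Subgroup.center_le_centralizer (R : Set E))
  rw [Subgroup.comap_inf, comap_commutator, comap_commutator]
  refine le_center_of_le_centralizer (P := H.comap π) (Q := K.comap π) ?_ ?_ ?_
  · rw [Subgroup.comap_sup_eq _ _ _ hπ, hprod, Subgroup.comap_top]
  · refine inf_le_right.trans (sup_le ?_ (hker_le _))
    exact commutator_le_centralizer_of_commutator_le_center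
      (Subgroup.commutator_comm (H.comap π) _ ▸ hPQ)
  · exact inf_le_left.trans (sup_le (commutator_le_centralizer_of_commutator_le_center hPQ)
      (hker_le _))

end CentralProduct

section Cocycles

theorem cocycle_one_left (F : cocycles2 G D) (g : G) : F.1 1 g = F.1 1 1 := by
  simpa using (F.2 1 1 g).symm

theorem cocycle_one_right (F : cocycles2 G D) (g : G) : F.1 g 1 = F.1 1 1 := by
  simpa using F.2 g 1 1

theorem cocycle_inv_left (F : cocycles2 G D) (g : G) : F.1 g⁻¹ g = F.1 g g⁻¹ := by
  simpa [cocycle_one_left, cocycle_one_right] using (F.2 g g⁻¹ g).symm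

theorem H2mk_eq_H2mk_iff {F F' : cocycles2 G D} :
    H2mk F = H2mk F' ↔ ∃ φ : G → D, ∀ g h, F'.1 g h = F.1 g h + (φ g + φ h - φ (g * h)) := by
  refine QuotientAddGroup.eq.trans (AddSubgroup.mem_addSubgroupOf.trans ?_)
  refine exists_congr fun φ => forall₂_congr fun g h => ?_
  show -F.1 g h + F'.1 g h = _ ↔ _
  rw [neg_add_eq_iff_eq_add]

theorem H2mk_eq_zero_iff {F : cocycles2 G D} :
    H2mk F = 0 ↔ ∃ φ : G → D, ∀ g h, F.1 g h = φ g + φ h - φ (g * h) :=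
  (QuotientAddGroup.eq_zero_iff _).trans AddSubgroup.mem_addSubgroupOf

theorem H2Map_H2mk {G' : Type} [Group G'] (π : G' →* G) (F : cocycles2 G D) :
    H2Map π (H2mk F) = H2mk (pullCocycle π F) :=
  QuotientAddGroup.map_mk _ _ _ _ _

theorem coboundary_mem_cocycles2 (φ : G → D) :
    (fun g h => φ g + φ h - φ (g * h)) ∈ cocycles2 G D := fun g h k => by
  simp only [mul_assoc]; abel

end Cocycles

section Transversal

variable (B : Subgroup G) [B.Normal]

noncomputable def cosetOffset (g : G) : B :=
  ⟨g * (g : G ⧸ B).out⁻¹, by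
    rw [← QuotientGroup.eq_one_iff, QuotientGroup.mk_mul, QuotientGroup.mk_inv,
      QuotientGroup.out_eq', mul_inv_cancel]⟩

noncomputable def factorSet (x y : G ⧸ B) : B :=
  ⟨x.out * y.out * (x * y).out⁻¹, by
    rw [← QuotientGroup.eq_one_iff, QuotientGroup.mk_mul, QuotientGroup.mk_mul,
      QuotientGroup.mk_inv, QuotientGroup.out_eq', QuotientGroup.out_eq',
      QuotientGroup.out_eq', mul_inv_cancel]⟩

variable {B}

theorem mk_mul_of_mem_left {b : G} (hb : b ∈ B) (g : G) : ((b * g : G) : G ⧸ B) = g := by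
  rw [QuotientGroup.mk_mul, (QuotientGroup.eq_one_iff _).mpr hb, one_mul]

theorem cosetOffset_mul_out (g : G) : (cosetOffset B g : G) * (g : G ⧸ B).out = g :=
  inv_mul_cancel_right g _

theorem factorSet_mul_out (x y : G ⧸ B) :
    (factorSet B x y : G) * (x * y).out = x.out * y.out :=
  inv_mul_cancel_right _ _

theorem cosetOffset_mul_left (b : B) (g : G) :
    cosetOffset B (b * g) = b * cosetOffset B g := by
  ext
  simp only [cosetOffset, Subgroup.coe_mul, mk_mul_of_mem_left b.2, mul_assoc]

theorem cosetOffset_mul (hB : B ≤ Subgroup.center G) (g h : G) :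
    cosetOffset B (g * h) = cosetOffset B g * cosetOffset B h * factorSet B g h := by
  have key := Subgroup.mem_center_iff.mp (hB (cosetOffset B h).2) (g : G ⧸ B).out
  simp only [cosetOffset] at key
  ext
  simp only [cosetOffset, factorSet, Subgroup.coe_mul, QuotientGroup.mk_mul]
  calc _ = g * (g : G ⧸ B).out⁻¹ * ((g : G ⧸ B).out * (h * (h : G ⧸ B).out⁻¹))
        * (h : G ⧸ B).out * ((g : G ⧸ B) * h).out⁻¹ := by group
    _ = _ := by rw [key]; group

theorem factorSet_mul_factorSet (hB : B ≤ Subgroup.center G) (x y z : G ⧸ B) :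
    factorSet B x y * factorSet B (x * y) z = factorSet B y z * factorSet B x (y * z) := by
  have key := Subgroup.mem_center_iff.mp (hB (factorSet B y z).2) x.out
  simp only [factorSet] at key
  ext
  simp only [factorSet, Subgroup.coe_mul]
  calc _ = x.out * (y.out * z.out * (y * z).out⁻¹) * (y * z).out * (x * y * z).out⁻¹ := by
        group
    _ = _ := by rw [key, mul_assoc x y z]; group

end Transversal

/-- The extension of `G` by `D` defined by `F`. The group law is twisted by
`F g h - F 1 1` rather than `F g h`, so that `(0, 1)` is the identity although `F` need not
be normalized. -/
@[ext] structure CocycleExt (F : cocycles2 G D) : Type where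
  coeff : D
  base : G

namespace CocycleExt

variable {F : cocycles2 G D}

instance : Group (CocycleExt F) where
  mul x y := ⟨x.coeff + y.coeff + F.1 x.base y.base - F.1 1 1, x.base * y.base⟩
  one := ⟨0, 1⟩
  inv x := ⟨-x.coeff - F.1 x.base x.base⁻¹ + F.1 1 1, x.base⁻¹⟩
  mul_assoc x y z := by
    ext
    · show x.coeff + y.coeff + F.1 x.base y.base - F.1 1 1 + z.coeff
          + F.1 (x.base * y.base) z.base - F.1 1 1
        = x.coeff + (y.coeff + z.coeff + F.1 y.base z.base - F.1 1 1)
          + F.1 x.base (y.base * z.base) - F.1 1 1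
      calc _ = x.coeff + y.coeff + z.coeff
            + (F.1 x.base y.base + F.1 (x.base * y.base) z.base) - 2 • F.1 1 1 := by abel
        _ = x.coeff + y.coeff + z.coeff
            + (F.1 y.base z.base + F.1 x.base (y.base * z.base)) - 2 • F.1 1 1 := by rw [F.2]
        _ = _ := by abel
    · exact mul_assoc x.base y.base z.base
  one_mul x := by
    ext
    · show 0 + x.coeff + F.1 1 x.base - F.1 1 1 = x.coeff
      rw [cocycle_one_left]; abel
    · exact one_mul x.base
  mul_one x := by
    ext
    · show x.coeff + 0 + F.1 x.base 1 - F.1 1 1 = x.coeff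
      rw [cocycle_one_right]; abel
    · exact mul_one x.base
  inv_mul_cancel x := by
    ext
    · show -x.coeff - F.1 x.base x.base⁻¹ + F.1 1 1 + x.coeff
          + F.1 x.base⁻¹ x.base - F.1 1 1 = 0
      rw [cocycle_inv_left]; abel
    · exact inv_mul_cancel x.base

theorem coeff_mul (x y : CocycleExt F) :
    (x * y).coeff = x.coeff + y.coeff + F.1 x.base y.base - F.1 1 1 := rfl

theorem base_mul (x y : CocycleExt F) : (x * y).base = x.base * y.base := rfl

theorem coeff_inv (x : CocycleExt F) :
    x⁻¹.coeff = -x.coeff - F.1 x.base x.base⁻¹ + F.1 1 1 := rfl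

theorem base_inv (x : CocycleExt F) : x⁻¹.base = x.base⁻¹ := rfl

variable (F) in
def proj : CocycleExt F →* G where
  toFun x := x.base
  map_one' := rfl
  map_mul' _ _ := rfl

theorem proj_surjective : Function.Surjective (proj F) := fun g => ⟨⟨0, g⟩, rfl⟩

theorem ker_proj_le_center : (proj F).ker ≤ Subgroup.center (CocycleExt F) := by
  intro x (hx : x.base = 1)
  refine Subgroup.mem_center_iff.mpr fun y => ?_
  ext
  · show y.coeff + x.coeff + F.1 y.base x.base - F.1 1 1
      = x.coeff + y.coeff + F.1 x.base y.base - F.1 1 1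
    rw [hx, cocycle_one_left F y.base, cocycle_one_right F y.base]; abel
  · show y.base * x.base = x.base * y.base
    rw [hx, one_mul, mul_one]

/-- The preimage `S` of `B` is abelian and contains `D` as a divisible, hence injective,
subgroup; a retraction `S → D` corrects the set-theoretic lift `b ↦ (0, b)` into a
homomorphism. -/
theorem exists_splitting [DivisibleBy D ℤ] {B : Subgroup G}
    (hB : B.comap (proj F) ≤ Subgroup.center (CocycleExt F)) :
    ∃ s : B →* CocycleExt F, ∀ b, (s b).base = b := by
  let S := B.comap (proj F)
  let _ : CommGroup S :=
    { (inferInstance : Group S) with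
      mul_comm := fun a b => Subtype.ext (Subgroup.mem_center_iff.mp (hB a.2) b).symm }
  let ι : D → S := fun d => ⟨⟨d, 1⟩, B.one_mem⟩
  let lift : B → S := fun b => ⟨⟨0, b⟩, b.2⟩
  have ι_add : ∀ d d', ι (d + d') = ι d * ι d' := fun d d' => by
    ext
    · exact (add_sub_cancel_right _ _).symm
    · exact (mul_one 1).symm
  have lift_mul : ∀ b b', lift b * lift b' = ι (F.1 b b' - F.1 1 1) * lift (b * b') := by
    intro b b'
    ext
    · show 0 + 0 + F.1 b b' - F.1 1 1 = F.1 b b' - F.1 1 1 + 0 + F.1 1 (b * b') - F.1 1 1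
      rw [cocycle_one_left F (_ * _)]; abel
    · exact (one_mul _).symm
  let j : D →+ Additive S :=
    AddMonoidHom.mk' (fun d => .ofMul (ι d)) fun d d' => congrArg Additive.ofMul (ι_add d d')
  have hj : Function.Injective j := fun d d' h =>
    congrArg (fun z : Additive S => ((Additive.toMul z : S) : CocycleExt F).coeff) h
  obtain ⟨L, hL⟩ := (Module.Baer.of_divisible D).injective.out j.toIntLinearMap hj LinearMap.id
  have hL_lift : ∀ b b', L (.ofMul (lift (b * b')))
      = L (.ofMul (lift b)) + L (.ofMul (lift b')) - (F.1 b b' - F.1 1 1) := fun b b' => by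
    have h := congrArg (fun x => L (Additive.ofMul x)) (lift_mul b b')
    simp only [ofMul_mul, map_add] at h
    have hLι : L (.ofMul (ι (F.1 b b' - F.1 1 1))) = F.1 b b' - F.1 1 1 := hL _
    rw [h, hLι]
    abel
  refine ⟨MonoidHom.mk' (fun b => ⟨-L (.ofMul (lift b)), b⟩) fun b b' => ?_, fun b => rfl⟩
  ext
  · show -L (.ofMul (lift (b * b')))
      = -L (.ofMul (lift b)) + -L (.ofMul (lift b')) + F.1 b b' - F.1 1 1
    rw [hL_lift]; abel
  · rfl

theorem exists_cohomologous_of_section (t : G → CocycleExt F) (ht : ∀ g, (t g).base = g) :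
    ∃ F' : cocycles2 G D, H2mk F' = H2mk F ∧
      ∀ g h, F'.1 g h = (t g * t h * (t (g * h))⁻¹).coeff := by
  let φ : G → D := fun g => (t g).coeff - F.1 1 1
  refine ⟨F + ⟨_, coboundary_mem_cocycles2 φ⟩, ?_, fun g h => ?_⟩
  · refine H2mk_eq_H2mk_iff.mpr ⟨fun g => -φ g, fun g h => ?_⟩
    show _ = F.1 g h + (φ g + φ h - φ (g * h)) + (-φ g + -φ h - -φ (g * h))
    abel
  · show F.1 g h + (φ g + φ h - φ (g * h)) = _
    simp only [coeff_mul, coeff_inv, base_mul, base_inv, ht, φ]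
    abel

theorem exists_invariant_cohomologous [DivisibleBy D ℤ] {B : Subgroup G} [B.Normal]
    (hB : B.comap (proj F) ≤ Subgroup.center (CocycleExt F)) :
    ∃ F' : cocycles2 G D, H2mk F' = H2mk F ∧
      ∀ b ∈ B, ∀ g h, F'.1 (b * g) h = F'.1 g h ∧ F'.1 g (b * h) = F'.1 g h := by
  obtain ⟨s, hs⟩ := exists_splitting hB
  have hBG : ∀ b ∈ B, ∀ g : G, g * b = b * g := fun b hb g =>
    congrArg base (Subgroup.mem_center_iff.mp (hB (x := ⟨0, b⟩) hb) ⟨0, g⟩)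
  have hs_comm : ∀ (b : B) (x : CocycleExt F), x * s b = s b * x := fun b x =>
    Subgroup.mem_center_iff.mp (hB (x := s b) (show (s b).base ∈ B by rw [hs]; exact b.2)) x
  have hs_conj : ∀ (b : B) (x y z : CocycleExt F), s b * x * y * (s b * z)⁻¹ = x * y * z⁻¹ :=
    fun b x y z => by rw [← Commute.mul_inv_cancel (hs_comm b (x * y * z⁻¹)).symm]; group
  let t : G → CocycleExt F := fun g => s (cosetOffset B g) * ⟨0, (g : G ⧸ B).out⟩
  have ht : ∀ g, (t g).base = g := fun g => by
    rw [base_mul, hs]; exact cosetOffset_mul_out g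
  have ht_mul_left : ∀ b (hb : b ∈ B) g, t (b * g) = s ⟨b, hb⟩ * t g := fun b hb g => by
    simp only [t, cosetOffset_mul_left ⟨b, hb⟩, map_mul, mk_mul_of_mem_left hb, mul_assoc]
  obtain ⟨F', hF'F, hF'⟩ := exists_cohomologous_of_section t ht
  refine ⟨F', hF'F, fun b hb g h => ⟨?_, ?_⟩⟩
  · rw [hF', hF', mul_assoc b, ht_mul_left b hb, ht_mul_left b hb, hs_conj]
  · have hgbh : g * (b * h) = b * (g * h) := by rw [← mul_assoc, hBG b hb g, mul_assoc]
    rw [hF', hF', hgbh, ht_mul_left b hb, ht_mul_left b hb, ← mul_assoc, hs_comm, hs_conj]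

end CocycleExt

section Inflation

variable {B : Subgroup G} [B.Normal]

theorem exists_pullCocycle_eq_of_invariant (F : cocycles2 G D)
    (hF : ∀ b ∈ B, ∀ g h, F.1 (b * g) h = F.1 g h ∧ F.1 g (b * h) = F.1 g h) :
    ∃ F' : cocycles2 (G ⧸ B) D, pullCocycle (QuotientGroup.mk' B) F' = F := by
  have hout : ∀ g h : G, F.1 (g : G ⧸ B).out (h : G ⧸ B).out = F.1 g h := fun g h => by
    conv_rhs => rw [← cosetOffset_mul_out (B := B) g, ← cosetOffset_mul_out (B := B) h]
    rw [(hF _ (cosetOffset B g).2 _ _).1, (hF _ (cosetOffset B h).2 _ _).2]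
  refine ⟨⟨fun x y => F.1 x.out y.out, fun x y z => ?_⟩,
    Subtype.ext (funext₂ fun g h => hout g h)⟩
  have hxy := hout (x.out * y.out) z.out
  have hyz := hout x.out (y.out * z.out)
  rw [QuotientGroup.mk_mul] at hxy hyz
  simp only [QuotientGroup.out_eq'] at hxy hyz
  show F.1 x.out y.out + F.1 (x * y).out z.out = F.1 y.out z.out + F.1 x.out (y * z).out
  rw [hxy, hyz]
  exact F.2 _ _ _

theorem H2Map_mk'_surjective [DivisibleBy D ℤ]
    (hB : ∀ F : cocycles2 G D, B.comap (CocycleExt.proj F) ≤ Subgroup.center (CocycleExt F)) :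
    Function.Surjective (H2Map (QuotientGroup.mk' B) : H2 (G ⧸ B) D →+ H2 G D) := by
  refine fun q => QuotientAddGroup.induction_on q fun F => ?_
  obtain ⟨F', hF'F, hF'⟩ := CocycleExt.exists_invariant_cohomologous (hB F)
  obtain ⟨F'', hF''⟩ := exists_pullCocycle_eq_of_invariant F' hF'
  exact ⟨H2mk F'', by rw [H2Map_H2mk, hF'', hF'F]⟩

end Inflation

section Transgression

variable {B : Subgroup G} [B.Normal]

variable (D) in
noncomputable def transgressionCocycle (hB : B ≤ Subgroup.center G) :
    (Additive B →+ D) →+ cocycles2 (G ⧸ B) D where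
  toFun χ := ⟨fun x y => χ (.ofMul (factorSet B x y)), fun x y z => by
    simpa only [ofMul_mul, map_add] using
      congrArg (fun b => χ (.ofMul b)) (factorSet_mul_factorSet hB x y z)⟩
  map_zero' := rfl
  map_add' _ _ := rfl

variable (D) in
noncomputable def transgression (hB : B ≤ Subgroup.center G) :
    (Additive B →+ D) →+ H2 (G ⧸ B) D :=
  (QuotientAddGroup.mk' _).comp (transgressionCocycle D hB)

theorem transgression_apply (hB : B ≤ Subgroup.center G) (χ : Additive B →+ D) :
    transgression D hB χ = H2mk (transgressionCocycle D hB χ) := rfl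

theorem map_ofMul_cosetOffset_mul (hB : B ≤ Subgroup.center G) (χ : Additive B →+ D) (g h : G) :
    χ (.ofMul (cosetOffset B (g * h))) = χ (.ofMul (cosetOffset B g))
      + χ (.ofMul (cosetOffset B h)) + χ (.ofMul (factorSet B g h)) := by
  rw [cosetOffset_mul hB, ofMul_mul, ofMul_mul, map_add, map_add]

theorem H2Map_transgression (hB : B ≤ Subgroup.center G) (χ : Additive B →+ D) :
    H2Map (QuotientGroup.mk' B) (transgression D hB χ) = 0 := by
  rw [transgression_apply, H2Map_H2mk, H2mk_eq_zero_iff]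
  refine ⟨fun g => -χ (.ofMul (cosetOffset B g)), fun g h => ?_⟩
  show χ (.ofMul (factorSet B g h)) = -χ (.ofMul (cosetOffset B g))
    + -χ (.ofMul (cosetOffset B h)) - -χ (.ofMul (cosetOffset B (g * h)))
  rw [map_ofMul_cosetOffset_mul hB]
  abel

/-- If `χ ∘ factorSet = δψ`, then `g ↦ χ (cosetOffset B g) + ψ (gB)` is a homomorphism
`G → D`; it vanishes on `B ≤ ⁅G, G⁆`, and on `B` it differs from `χ` by a constant. -/
theorem transgression_injective (hB : B ≤ Subgroup.center G) (hBG : B ≤ commutator G) :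
    Function.Injective (transgression D hB) := by
  refine (injective_iff_map_eq_zero _).mpr fun χ hχ => ?_
  obtain ⟨ψ, hψ⟩ := H2mk_eq_zero_iff.mp hχ
  have hψ' : ∀ x y, χ (.ofMul (factorSet B x y)) = ψ x + ψ y - ψ (x * y) := hψ
  let Φ : G →* Multiplicative D :=
    MonoidHom.mk' (fun g => .ofAdd (χ (.ofMul (cosetOffset B g)) + ψ g)) fun g h => by
      rw [← ofAdd_add, map_ofMul_cosetOffset_mul hB, QuotientGroup.mk_mul, hψ']
      congr 1
      abel
  refine AddMonoidHom.ext fun b => ?_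
  have hΦb : Φ (b.toMul * 1) = 1 := by
    rw [mul_one]
    exact Abelianization.commutator_subset_ker Φ (hBG b.toMul.2)
  have hΦ : χ b + (Φ 1).toAdd = (Φ (b.toMul * 1)).toAdd := by
    show χ b + (χ (.ofMul (cosetOffset B 1)) + ψ ↑(1 : G))
      = χ (.ofMul (cosetOffset B (b.toMul * 1))) + ψ ↑(b.toMul * 1 : G)
    rw [cosetOffset_mul_left, mk_mul_of_mem_left b.toMul.2, ofMul_mul, map_add, ofMul_toMul]
    abel
  rw [map_one, hΦb, toAdd_one, add_zero] at hΦ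
  exact hΦ

theorem ker_H2Map_le_range_transgression (hB : B ≤ Subgroup.center G) :
    (H2Map (QuotientGroup.mk' B) : H2 (G ⧸ B) D →+ H2 G D).ker ≤
      (transgression D hB).range := by
  intro q hq
  induction q using QuotientAddGroup.induction_on with | H F => ?_
  obtain ⟨φ, hφ⟩ := H2mk_eq_zero_iff.mp ((H2Map_H2mk _ F).symm.trans hq)
  have hφ' : ∀ g h : G, F.1 g h = φ g + φ h - φ (g * h) := hφ
  have hφB : ∀ b ∈ B, ∀ g, φ (b * g) = φ b + φ g - φ 1 := fun b hb g => by
    have hbg := hφ' b g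
    have h11 := hφ' 1 1
    rw [(QuotientGroup.eq_one_iff b).mpr hb, cocycle_one_left] at hbg
    rw [one_mul, QuotientGroup.mk_one] at h11
    calc φ (b * g) = φ b + φ g - (φ b + φ g - φ (b * g)) := by abel
      _ = _ := by rw [← hbg, h11]; abel
  let χ : Additive B →+ D := AddMonoidHom.mk' (fun b => φ 1 - φ b.toMul) fun b b' => by
    show φ 1 - φ (b.toMul * b'.toMul) = _
    rw [hφB _ b.toMul.2]
    abel
  refine AddMonoidHom.mem_range.mpr ⟨χ, H2mk_eq_H2mk_iff.mpr ⟨fun x => φ x.out, fun x y => ?_⟩⟩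
  have hxy := hφ' x.out y.out
  rw [QuotientGroup.out_eq', QuotientGroup.out_eq', ← factorSet_mul_out,
    hφB _ (factorSet B x y).2] at hxy
  show F.1 x y = φ 1 - φ (factorSet B x y) + _
  rw [hxy]
  abel

noncomputable def transgressionEquivKer (hB : B ≤ Subgroup.center G) (hBG : B ≤ commutator G) :
    (Additive B →+ D) ≃+ (H2Map (QuotientGroup.mk' B) : H2 (G ⧸ B) D →+ H2 G D).ker :=
  AddEquiv.ofBijective ((transgression D hB).codRestrict _ (H2Map_transgression hB))
    ⟨fun _ _ h => transgression_injective hB hBG (congrArg Subtype.val h), fun ⟨_, hq⟩ =>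
      (ker_H2Map_le_range_transgression hB hq).imp fun _ hχ => Subtype.ext hχ⟩

end Transgression

theorem theoremA_general {G : Type} [Group G] (H K : Subgroup G)
    (hprod : H ⊔ K = ⊤) (hcomm : ∀ h ∈ H, ∀ k ∈ K, Commute h k)
    (D : Type) [AddCommGroup D] [DivisibleBy D ℤ]
    (B : Subgroup G) [B.Normal] (hB : B ≤ ⁅H, H⁆ ⊓ ⁅K, K⁆) :
    Function.Surjective (H2Map (QuotientGroup.mk' B) : H2 (G ⧸ B) D →+ H2 G D) ∧
    Nonempty (↥(AddMonoidHom.ker (H2Map (QuotientGroup.mk' B) : H2 (G ⧸ B) D →+ H2 G D)) ≃+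
      (Additive ↥B →+ D)) ∧
    Nonempty (H2 G D ≃+
      (H2 (G ⧸ B) D ⧸ AddMonoidHom.ker (H2Map (QuotientGroup.mk' B) : H2 (G ⧸ B) D →+ H2 G D))) := by
  have hHK : H ≤ Subgroup.centralizer K := fun h hh =>
    Subgroup.mem_centralizer_iff.mpr fun k hk => (hcomm h hh k hk).symm
  have hKH : K ≤ Subgroup.centralizer H := Subgroup.le_centralizer_iff.mp hHK
  have hBZ : B ≤ Subgroup.center G := le_center_of_le_centralizer hprod
    (hB.trans (inf_le_right.trans ((commutator_le_self K).trans hKH)))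
    (hB.trans (inf_le_left.trans ((commutator_le_self H).trans hHK)))
  have hBG : B ≤ commutator G :=
    hB.trans (inf_le_left.trans (Subgroup.commutator_mono le_top le_top))
  have hsurj := H2Map_mk'_surjective (D := D) fun _ => (Subgroup.comap_mono hB).trans
    (comap_commutator_inf_le_center CocycleExt.proj_surjective CocycleExt.ker_proj_le_center
      hprod (Subgroup.commutator_eq_bot_iff_le_centralizer.mpr hHK))
  exact ⟨hsurj, ⟨(transgressionEquivKer hBZ hBG).symm⟩,
    ⟨(QuotientAddGroup.quotientKerEquivOfSurjective _ hsurj).symm⟩⟩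

/-- **Theorem A.** If `B ≤ Z = ⁅H,H⁆ ⊓ ⁅K,K⁆`, then the inflation map
`H²(G/B, D) → H²(G, D)` is surjective, its kernel `N` is isomorphic to `Hom(B, D)`,
and consequently `H²(G, D) ≅ H²(G/B, D)/N`. -/
theorem theoremA {G : Type} [Group G] (H K : Subgroup G) [H.Normal] [K.Normal]
    (hprod : H ⊔ K = ⊤) (hcomm : ∀ h ∈ H, ∀ k ∈ K, Commute h k)
    (D : Type) [AddCommGroup D] [DivisibleBy D ℤ]
    (B : Subgroup G) [B.Normal] (hB : B ≤ ⁅H, H⁆ ⊓ ⁅K, K⁆) :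
    Function.Surjective (H2Map (QuotientGroup.mk' B) : H2 (G ⧸ B) D →+ H2 G D) ∧
    Nonempty (↥(AddMonoidHom.ker (H2Map (QuotientGroup.mk' B) : H2 (G ⧸ B) D →+ H2 G D)) ≃+
      (Additive ↥B →+ D)) ∧
    Nonempty (H2 G D ≃+
      (H2 (G ⧸ B) D ⧸ AddMonoidHom.ker (H2Map (QuotientGroup.mk' B) : H2 (G ⧸ B) D →+ H2 G D))) :=
  theoremA_general H K hprod hcomm D B hB

end SchurCP
end

section
/- Let F be a group with normal subgroups R, S₁, S₂ and S such that F = S₁S₂, [S₁, S₂] ≤ R, R ≤ S ≤ ([S₁,S₁] ∩ [S₂,S₂])·R, and [F, S] ≤ R. Then [F, R] = R ∩ [F, S]. -/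
/-!
Setting (central products): `G` is a group with normal subgroups `H` and `K` such that
`G = HK` (i.e. `H ⊔ K = ⊤`) and `[H, K] = 1` (i.e. every element of `H` commutes with
every element of `K`).  We set `A = H ⊓ K` and `Z = ⁅H,H⁆ ⊓ ⁅K,K⁆`; both are central
in `G`.  Coefficients are taken in a divisible abelian group `D`, regarded as a trivial
module.  Second cohomology `H2 X D` is realized concretely as (inhomogeneous)
2-cocycles modulo 2-coboundaries, and `Hom(X, D)` is realized as `Additive X →+ D`.
-/

open scoped TensorProduct

set_option maxHeartbeats 1000000
set_option synthInstance.maxHeartbeats 1000000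
set_option synthInstance.maxSize 2000

namespace SchurCP

variable (G : Type) [Group G] (D : Type) [AddCommGroup D]

variable {G D}

/-!
Modulo `[F, R]` the subgroup `R`, hence `[S₁, S₂]`, is central, so by the three subgroups
lemma `[S₁, S₁] ∩ [S₂, S₂]` commutes with `S₁` and with `S₂`, i.e. with `F = S₁S₂`. Together
with `R` it generates a subgroup containing `S`, so `S` is central modulo `[F, R]`; that is,
`[F, S] ≤ [F, R]`.
-/

section QuotientCommutator

variable {G : Type*} [Group G] {N : Subgroup G} [N.Normal]

theorem commutator_le_iff_commutator_map_mk'_eq_bot {H K : Subgroup G} :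
    ⁅H, K⁆ ≤ N ↔ ⁅H.map (QuotientGroup.mk' N), K.map (QuotientGroup.mk' N)⁆ = ⊥ := by
  rw [← Subgroup.map_commutator, Subgroup.map_eq_bot_iff, QuotientGroup.ker_mk']

theorem commutator_commutator_le_of_rotate {H₁ H₂ H₃ : Subgroup G}
    (h₁ : ⁅⁅H₂, H₃⁆, H₁⁆ ≤ N) (h₂ : ⁅⁅H₃, H₁⁆, H₂⁆ ≤ N) : ⁅⁅H₁, H₂⁆, H₃⁆ ≤ N := by
  simp only [commutator_le_iff_commutator_map_mk'_eq_bot, Subgroup.map_commutator] at h₁ h₂ ⊢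
  exact Subgroup.commutator_commutator_eq_bot_of_rotate h₁ h₂

theorem commutator_sup_left_le {H₁ H₂ K : Subgroup G} (h₁ : ⁅H₁, K⁆ ≤ N) (h₂ : ⁅H₂, K⁆ ≤ N) :
    ⁅H₁ ⊔ H₂, K⁆ ≤ N := by
  simp only [commutator_le_iff_commutator_map_mk'_eq_bot, Subgroup.map_sup,
    Subgroup.commutator_eq_bot_iff_le_centralizer] at h₁ h₂ ⊢
  exact sup_le h₁ h₂

theorem commutator_sup_right_le {H K₁ K₂ : Subgroup G} (h₁ : ⁅H, K₁⁆ ≤ N) (h₂ : ⁅H, K₂⁆ ≤ N) :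
    ⁅H, K₁ ⊔ K₂⁆ ≤ N := by
  rw [Subgroup.commutator_comm] at h₁ h₂ ⊢
  exact commutator_sup_left_le h₁ h₂

end QuotientCommutator

theorem commutator_commutator_self_le_of_commutator_le {G : Type*} [Group G]
    {H K R : Subgroup G} [R.Normal] (h : ⁅H, K⁆ ≤ R) :
    ⁅⁅K, K⁆, H⁆ ≤ ⁅(⊤ : Subgroup G), R⁆ := by
  have hKH : ⁅K, H⁆ ≤ R := Subgroup.commutator_comm K H ▸ h
  have central {L : Subgroup G} (hL : L ≤ R) : ⁅L, K⁆ ≤ ⁅(⊤ : Subgroup G), R⁆ := by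
    rw [Subgroup.commutator_comm]
    exact Subgroup.commutator_mono le_top hL
  exact commutator_commutator_le_of_rotate (central hKH) (central h)

theorem commutator_eq_inf_commutator_general {F : Type} [Group F] (R S₁ S₂ S : Subgroup F)
    [R.Normal]
    (hF : S₁ ⊔ S₂ = ⊤)
    (h12 : ⁅S₁, S₂⁆ ≤ R)
    (hRS : R ≤ S)
    (hS : S ≤ (⁅S₁, S₁⁆ ⊓ ⁅S₂, S₂⁆) ⊔ R) :
    ⁅(⊤ : Subgroup F), R⁆ = R ⊓ ⁅(⊤ : Subgroup F), S⁆ := by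
  set N := ⁅(⊤ : Subgroup F), R⁆
  have h21 : ⁅S₂, S₁⁆ ≤ R := Subgroup.commutator_comm S₁ S₂ ▸ h12
  have hZS₁ : ⁅⁅S₁, S₁⁆ ⊓ ⁅S₂, S₂⁆, S₁⁆ ≤ N :=
    (Subgroup.commutator_mono inf_le_right le_rfl).trans
      (commutator_commutator_self_le_of_commutator_le h12)
  have hZS₂ : ⁅⁅S₁, S₁⁆ ⊓ ⁅S₂, S₂⁆, S₂⁆ ≤ N :=
    (Subgroup.commutator_mono inf_le_left le_rfl).trans
      (commutator_commutator_self_le_of_commutator_le h21)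
  have hZ : ⁅⁅S₁, S₁⁆ ⊓ ⁅S₂, S₂⁆, ⊤⁆ ≤ N := hF ▸ commutator_sup_right_le hZS₁ hZS₂
  have hSF : ⁅S, ⊤⁆ ≤ N :=
    (Subgroup.commutator_mono hS le_rfl).trans
      (commutator_sup_left_le hZ (Subgroup.commutator_comm R ⊤).le)
  exact le_antisymm
    (le_inf (Subgroup.commutator_le_right ⊤ R) (Subgroup.commutator_mono le_rfl hRS))
    (inf_le_right.trans (Subgroup.commutator_comm (⊤ : Subgroup F) S ▸ hSF))

/-- If `F = S₁S₂` with `R, S₁, S₂, S` normal, `[S₁,S₂] ≤ R`,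
`R ≤ S ≤ ([S₁,S₁] ∩ [S₂,S₂])·R` and `[F,S] ≤ R`, then `[F,R] = R ∩ [F,S]`. -/
theorem commutator_eq_inf_commutator {F : Type} [Group F] (R S₁ S₂ S : Subgroup F)
    [R.Normal] [S₁.Normal] [S₂.Normal] [S.Normal]
    (hF : S₁ ⊔ S₂ = ⊤)
    (h12 : ⁅S₁, S₂⁆ ≤ R)
    (hRS : R ≤ S)
    (hS : S ≤ (⁅S₁, S₁⁆ ⊓ ⁅S₂, S₂⁆) ⊔ R)
    (hFS : ⁅(⊤ : Subgroup F), S⁆ ≤ R) :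
    ⁅(⊤ : Subgroup F), R⁆ = R ⊓ ⁅(⊤ : Subgroup F), S⁆ :=
  commutator_eq_inf_commutator_general R S₁ S₂ S hF h12 hRS hS

end SchurCP
end

section
/- If Z = [H,H] ∩ [K,K] = 1, then θ' : H²(G, D) → H²(H, D) ⊕ H²(K, D) ⊕ Hom(H ⊗ K, D) is injective. -/
/-!
Setting (central products): `G` is a group with normal subgroups `H` and `K` such that
`G = HK` (i.e. `H ⊔ K = ⊤`) and `[H, K] = 1` (i.e. every element of `H` commutes with
every element of `K`).  We set `A = H ⊓ K` and `Z = ⁅H,H⁆ ⊓ ⁅K,K⁆`; both are central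
in `G`.  Coefficients are taken in a divisible abelian group `D`, regarded as a trivial
module.  Second cohomology `H2 X D` is realized concretely as (inhomogeneous)
2-cocycles modulo 2-coboundaries, and `Hom(X, D)` is realized as `Additive X →+ D`.
-/

open scoped TensorProduct

set_option maxHeartbeats 1000000
set_option synthInstance.maxHeartbeats 1000000
set_option synthInstance.maxSize 2000

namespace SchurCP

variable (G : Type) [Group G] (D : Type) [AddCommGroup D]

variable {G D}

/-!
Let `f` represent a class in the kernel of `θ'`, so that `f = δφ` on `H`, `f = δψ` on `K`, and
`f(h, k) = f(k, h)` for `h ∈ H`, `k ∈ K`. On `A = H ∩ K` the difference `ψ - φ` is a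
homomorphism. Because `Z = 1`, `A^ab` embeds into `H^ab × K^ab`, and the divisible group `D`
is an injective `ℤ`-module, so `ψ - φ = α + β` on `A` for homomorphisms `α` on `H` and `β` on `K`. After
replacing `φ` by `φ + α` and `ψ` by `ψ - β` the two cochains agree on `A`, and then
`Φ(hk) = φ(h) + ψ(k) - f(h, k)` is a well-defined cochain on `G = HK` with `δΦ = f`.
-/

section Cochains

variable {X : Type} [Group X] {D : Type} [AddCommGroup D]

def coboundary (φ : X → D) (x y : X) : D := φ x + φ y - φ (x * y)

theorem coboundary_add_addMonoidHom (φ : X → D) (α : Additive X →+ D) :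
    coboundary (fun x => φ x + α (.ofMul x)) = coboundary φ := by
  funext x y
  simp only [coboundary, ofMul_mul, map_add]
  abel

def homOfCoboundaryEq {φ ψ : X → D} (h : coboundary φ = coboundary ψ) : Additive X →+ D :=
  AddMonoidHom.mk' (fun x => ψ x.toMul - φ x.toMul) fun x y => by
    have hxy := congrFun₂ h x.toMul y.toMul
    simp only [coboundary, toMul_add] at hxy ⊢
    linear_combination (norm := abel) hxy

theorem homOfCoboundaryEq_apply {φ ψ : X → D} (h : coboundary φ = coboundary ψ) (x : X) :
    homOfCoboundaryEq h (.ofMul x) = ψ x - φ x :=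
  rfl

theorem H2mk_eq_zero_iff_s8 (f : cocycles2 X D) :
    H2mk f = 0 ↔ ∃ φ : X → D, (f : X → X → D) = coboundary φ := by
  refine (QuotientAddGroup.eq_zero_iff f).trans ?_
  rw [AddSubgroup.mem_addSubgroupOf]
  exact ⟨fun ⟨φ, hφ⟩ => ⟨φ, funext₂ hφ⟩, fun ⟨φ, hφ⟩ => ⟨φ, congrFun₂ hφ⟩⟩

theorem H2Map_H2mk_eq_zero_iff {G : Type} [Group G] (π : G →* X) (f : cocycles2 X D) :
    H2Map π (H2mk f) = 0 ↔
      ∃ φ : G → D, ∀ x y, (f : X → X → D) (π x) (π y) = coboundary φ x y := by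
  change H2mk (pullCocycle π f) = 0 ↔ _
  rw [H2mk_eq_zero_iff_s8]
  exact ⟨fun ⟨φ, hφ⟩ => ⟨φ, congrFun₂ hφ⟩, fun ⟨φ, hφ⟩ => ⟨φ, funext₂ hφ⟩⟩

theorem H2mk_eq_zero_of_surjective {G : Type} [Group G] {π : G →* X}
    (hπ : Function.Surjective π) (f : cocycles2 X D) (Φ : G → D)
    (hΦ : ∀ x y, (f : X → X → D) (π x) (π y) = coboundary Φ x y)
    (hfib : ∀ x y, π x = π y → Φ x = Φ y) : H2mk f = 0 := by
  let s := Function.surjInv hπ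
  have hs : ∀ g, π (s g) = g := Function.surjInv_eq hπ
  refine (H2mk_eq_zero_iff_s8 f).2 ⟨Φ ∘ s, funext₂ fun g g' => ?_⟩
  have hprod : Φ (s g * s g') = Φ (s (g * g')) := hfib _ _ (by rw [map_mul, hs, hs, hs])
  rw [← hs g, ← hs g', hΦ, coboundary, coboundary, hprod, hs, hs]
  rfl

end Cochains

section Splitting

variable {G : Type} [Group G] {H K : Subgroup G}

theorem abelianization_of_eq_one_iff (x : H) :
    Abelianization.of x = 1 ↔ (x : G) ∈ ⁅H, H⁆ := by
  rw [← MonoidHom.mem_ker, Abelianization.ker_of, ← H.map_subtype_commutator]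
  exact (Subgroup.mem_map_iff_mem H.subtype_injective).symm

variable (H K) in
def infAbelianizationToProd : Abelianization ↥(H ⊓ K) →* Abelianization H × Abelianization K :=
  (Abelianization.map (Subgroup.inclusion inf_le_left)).prod
    (Abelianization.map (Subgroup.inclusion inf_le_right))

theorem infAbelianizationToProd_injective (hZ : ⁅H, H⁆ ⊓ ⁅K, K⁆ = ⊥) :
    Function.Injective (infAbelianizationToProd H K) := by
  refine (injective_iff_map_eq_one _).2 fun q hq => ?_
  induction q using QuotientGroup.induction_on with | H a => ?_
  obtain ⟨haH, haK⟩ := Prod.mk_eq_one.1 hq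
  have hZa : (a : G) ∈ ⁅H, H⁆ ⊓ ⁅K, K⁆ :=
    ⟨(abelianization_of_eq_one_iff _).1 haH, (abelianization_of_eq_one_iff _).1 haK⟩
  rw [hZ, Subgroup.mem_bot] at hZa
  rw [show a = 1 from Subtype.ext hZa]
  rfl

theorem exists_add_eq_of_inf_commutator_eq_bot {D : Type} [AddCommGroup D] [DivisibleBy D ℤ]
    (hZ : ⁅H, H⁆ ⊓ ⁅K, K⁆ = ⊥) (χ : Additive ↥(H ⊓ K) →+ D) :
    ∃ (α : Additive H →+ D) (β : Additive K →+ D), ∀ a : ↥(H ⊓ K),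
      α (.ofMul (Subgroup.inclusion inf_le_left a)) +
        β (.ofMul (Subgroup.inclusion inf_le_right a)) = χ (.ofMul a) := by
  let χab : Additive (Abelianization ↥(H ⊓ K)) →+ D :=
    MonoidHom.toAdditiveLeft (Abelianization.lift (AddMonoidHom.toMultiplicativeRight χ))
  obtain ⟨ξ, hξ⟩ := (Module.Baer.of_divisible D).extension_property_addMonoidHom
    (MonoidHom.toAdditive (infAbelianizationToProd H K))
    (infAbelianizationToProd_injective hZ) χab
  refine ⟨ξ.comp (MonoidHom.toAdditive ((MonoidHom.inl _ _).comp Abelianization.of)),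
    ξ.comp (MonoidHom.toAdditive ((MonoidHom.inr _ _).comp Abelianization.of)), fun a => ?_⟩
  refine Eq.trans ?_ (DFunLike.congr_fun hξ (.ofMul (Abelianization.of a)))
  rw [AddMonoidHom.comp_apply, AddMonoidHom.comp_apply, ← map_add]
  exact congrArg ξ (Prod.ext (mul_one _) (one_mul _))

end Splitting

section CentralProduct

variable {G : Type} [Group G] {D : Type} [AddCommGroup D]

theorem cocycle_mul_mul (f : cocycles2 G D) {h k h' k' : G} (hc : Commute k h')
    (hs : (f : G → G → D) k h' = (f : G → G → D) h' k) :
    (f : G → G → D) (h * k) (h' * k') + (f : G → G → D) h k + (f : G → G → D) h' k' =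
      (f : G → G → D) h h' + (f : G → G → D) k k' + (f : G → G → D) (h * h') (k * k') := by
  have c₁ := f.2 h k (h' * k')
  have c₂ := f.2 k h' k'
  have c₃ := f.2 h' k k'
  have c₄ := f.2 h h' (k * k')
  rw [hs, hc.eq] at c₂
  rw [← mul_assoc k, hc.eq, mul_assoc] at c₁
  linear_combination (norm := abel) c₁ - c₂ + c₃ - c₄

theorem H2mk_eq_zero_of_glue {H K : Subgroup G} (hprod : H ⊔ K = ⊤)
    (hcomm : ∀ h ∈ H, ∀ k ∈ K, Commute h k) (f : cocycles2 G D) (φ : H → D) (ψ : K → D)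
    (hφ : ∀ x y : H, (f : G → G → D) x y = coboundary φ x y)
    (hψ : ∀ x y : K, (f : G → G → D) x y = coboundary ψ x y)
    (hsymm : ∀ (x : H) (y : K), (f : G → G → D) x y = (f : G → G → D) y x)
    (hA : ∀ a : ↥(H ⊓ K),
      φ (Subgroup.inclusion inf_le_left a) = ψ (Subgroup.inclusion inf_le_right a)) :
    H2mk f = 0 := by
  have hHK : ∀ (x : H) (y : K), Commute (H.subtype x) (K.subtype y) := fun x y =>
    hcomm x x.2 y y.2
  have hm : Function.Surjective (H.subtype.noncommCoprod K.subtype hHK) := by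
    rw [← MonoidHom.range_eq_top, MonoidHom.noncommCoprod_range, H.range_subtype,
      K.range_subtype, hprod]
  let Φ : H × K → D := fun p => φ p.1 + ψ p.2 - (f : G → G → D) p.1 p.2
  refine H2mk_eq_zero_of_surjective hm f Φ (fun p q => ?_) ?_
  · have hpq := cocycle_mul_mul f (h := p.1) (k' := q.2) (hcomm _ q.1.2 _ p.2.2).symm
      (hsymm q.1 p.2).symm
    have hφpq := hφ p.1 q.1
    have hψpq := hψ p.2 q.2
    simp only [coboundary] at hφpq hψpq ⊢
    simp only [Φ, MonoidHom.noncommCoprod_apply, Subgroup.coe_subtype, Prod.fst_mul,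
      Prod.snd_mul, Subgroup.coe_mul]
    linear_combination (norm := abel) hpq + hφpq + hψpq
  · have hshift : ∀ (x : H) (a : ↥(H ⊓ K)) (y : K),
        Φ (x * Subgroup.inclusion inf_le_left a, y) =
          Φ (x, Subgroup.inclusion inf_le_right a * y) := by
      intro x a y
      have hc := f.2 x a y
      have hφxa := hφ x (Subgroup.inclusion inf_le_left a)
      have hψay := hψ (Subgroup.inclusion inf_le_right a) y
      simp only [coboundary, Subgroup.coe_inclusion] at hφxa hψay
      simp only [Φ, Subgroup.coe_mul, Subgroup.coe_inclusion]
      linear_combination (norm := abel) hA a - hc + hφxa - hψay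
    rintro ⟨x, y⟩ ⟨x', y'⟩ hxy
    simp only [MonoidHom.noncommCoprod_apply, Subgroup.coe_subtype] at hxy
    have hxy' : (x' : G)⁻¹ * x = y' * (y : G)⁻¹ := by
      rw [inv_mul_eq_iff_eq_mul, ← mul_assoc, ← hxy, mul_inv_cancel_right]
    have hxK : (x' : G)⁻¹ * x ∈ K := hxy' ▸ K.mul_mem y'.2 (K.inv_mem y.2)
    obtain ⟨a, rfl, rfl⟩ : ∃ a : ↥(H ⊓ K), x = x' * Subgroup.inclusion inf_le_left a ∧
        y' = Subgroup.inclusion inf_le_right a * y :=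
      ⟨⟨_, H.mul_mem (H.inv_mem x'.2) x.2, hxK⟩, Subtype.ext (mul_inv_cancel_left _ _).symm,
        Subtype.ext (by simp [hxy'])⟩
    exact hshift x' a y

theorem H2mk_eq_zero_of_restrict_eq_coboundary [DivisibleBy D ℤ] {H K : Subgroup G}
    (hprod : H ⊔ K = ⊤) (hcomm : ∀ h ∈ H, ∀ k ∈ K, Commute h k) (hZ : ⁅H, H⁆ ⊓ ⁅K, K⁆ = ⊥)
    (f : cocycles2 G D) (φ : H → D) (ψ : K → D)
    (hφ : ∀ x y : H, (f : G → G → D) x y = coboundary φ x y)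
    (hψ : ∀ x y : K, (f : G → G → D) x y = coboundary ψ x y)
    (hsymm : ∀ (x : H) (y : K), (f : G → G → D) x y = (f : G → G → D) y x) :
    H2mk f = 0 := by
  have hδ : coboundary (φ ∘ Subgroup.inclusion (inf_le_left (b := K))) =
      coboundary (ψ ∘ Subgroup.inclusion inf_le_right) :=
    funext₂ fun a b => (hφ _ _).symm.trans
      (hψ (Subgroup.inclusion inf_le_right a) (Subgroup.inclusion inf_le_right b))
  obtain ⟨α, β, hαβ⟩ := exists_add_eq_of_inf_commutator_eq_bot hZ (homOfCoboundaryEq hδ)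
  refine H2mk_eq_zero_of_glue hprod hcomm f (fun x => φ x + α (.ofMul x))
    (fun y => ψ y + (-β) (.ofMul y)) (fun x y => ?_) (fun x y => ?_) hsymm fun a => ?_
  · rw [coboundary_add_addMonoidHom, hφ]
  · rw [coboundary_add_addMonoidHom, hψ]
  · have hαβa := hαβ a
    rw [homOfCoboundaryEq_apply] at hαβa
    simp only [AddMonoidHom.neg_apply, Function.comp_apply] at hαβa ⊢
    linear_combination (norm := abel) hαβa

end CentralProduct

theorem theta'_injective_general {G : Type} [Group G] (H K : Subgroup G)
    (hprod : H ⊔ K = ⊤) (hcomm : ∀ h ∈ H, ∀ k ∈ K, Commute h k)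
    (D : Type) [AddCommGroup D] [DivisibleBy D ℤ]
    (hZ : ⁅H, H⁆ ⊓ ⁅K, K⁆ = ⊥)
    (ν : H2 G D →+ (AbTensor ↥H ↥K →+ D))
    (hν : ∀ f : cocycles2 G D, ∀ (h : ↥H) (k : ↥K),
      ν (H2mk f) (tmulAb h k) = (f : G → G → D) ↑h ↑k - (f : G → G → D) ↑k ↑h) :
    Function.Injective (fun ξ : H2 G D =>
      (H2Map H.subtype ξ, H2Map K.subtype ξ, ν ξ)) := by
  let θ := (H2Map H.subtype).prod ((H2Map K.subtype).prod ν)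
  refine (injective_iff_map_eq_zero θ).2 fun ξ hξ => ?_
  induction ξ using QuotientAddGroup.induction_on with | H f => ?_
  have hξf : (H2Map H.subtype (H2mk f), H2Map K.subtype (H2mk f), ν (H2mk f)) = 0 := hξ
  simp only [Prod.mk_eq_zero] at hξf
  obtain ⟨hH, hK, hν₀⟩ := hξf
  obtain ⟨φ, hφ⟩ := (H2Map_H2mk_eq_zero_iff _ f).1 hH
  obtain ⟨ψ, hψ⟩ := (H2Map_H2mk_eq_zero_iff _ f).1 hK
  refine H2mk_eq_zero_of_restrict_eq_coboundary hprod hcomm hZ f φ ψ hφ hψ fun x y => ?_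
  exact sub_eq_zero.1 ((hν f x y).symm.trans (by rw [hν₀]; rfl))

/-- If `Z = ⁅H,H⁆ ⊓ ⁅K,K⁆ = 1`, then `θ' = (res, res, ν) :
H²(G, D) → H²(H, D) ⊕ H²(K, D) ⊕ Hom(H ⊗ K, D)` is injective. -/
theorem theta'_injective {G : Type} [Group G] (H K : Subgroup G) [H.Normal] [K.Normal]
    (hprod : H ⊔ K = ⊤) (hcomm : ∀ h ∈ H, ∀ k ∈ K, Commute h k)
    (D : Type) [AddCommGroup D] [DivisibleBy D ℤ]
    (hZ : ⁅H, H⁆ ⊓ ⁅K, K⁆ = ⊥)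
    (ν : H2 G D →+ (AbTensor ↥H ↥K →+ D))
    (hν : ∀ f : cocycles2 G D, ∀ (h : ↥H) (k : ↥K),
      ν (H2mk f) (tmulAb h k) = (f : G → G → D) ↑h ↑k - (f : G → G → D) ↑k ↑h) :
    Function.Injective (fun ξ : H2 G D =>
      (H2Map H.subtype ξ, H2Map K.subtype ξ, ν ξ)) :=
  theta'_injective_general H K hprod hcomm D hZ ν hν

end SchurCP
end
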